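/- Let ε_v > 0 and let (x, ŷ, v̂) ∈ ℝ^{d_x} × ℝ^{d_y} × ℝ^{d_y} satisfy ‖∇_v R(x, ŷ, v̂)‖² ≤ ε_v. Then ‖∇̄f(x, ŷ, v̂)‖² ≤ 2C_{g_{xy}}²ε_v/μ² + 4C_{g_{xy}}²C_{f_y}²/μ² + 4C_{f_x}². -/

import Mathlib

noncomputable section

open scoped RealInnerProductSpace

variable {dx dy : ℕ}

/-- Partial gradient in the first argument. -/
def gX (f : EuclideanSpace ℝ (Fin dx) → EuclideanSpace ℝ (Fin dy) → ℝ)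
    (x : EuclideanSpace ℝ (Fin dx)) (y : EuclideanSpace ℝ (Fin dy)) :
    EuclideanSpace ℝ (Fin dx) :=
  gradient (fun x' => f x' y) x

/-- Partial gradient in the second argument. -/
def gY (f : EuclideanSpace ℝ (Fin dx) → EuclideanSpace ℝ (Fin dy) → ℝ)
    (x : EuclideanSpace ℝ (Fin dx)) (y : EuclideanSpace ℝ (Fin dy)) :
    EuclideanSpace ℝ (Fin dy) :=
  gradient (fun y' => f x y') y

/-- Second derivative `∇_y∇_y g (x,y)` as a linear map `ℝ^{d_y} → ℝ^{d_y}`. -/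
def gYY (g : EuclideanSpace ℝ (Fin dx) → EuclideanSpace ℝ (Fin dy) → ℝ)
    (x : EuclideanSpace ℝ (Fin dx)) (y : EuclideanSpace ℝ (Fin dy)) :
    EuclideanSpace ℝ (Fin dy) →L[ℝ] EuclideanSpace ℝ (Fin dy) :=
  fderiv ℝ (fun y' => gY g x y') y

/-- Mixed second derivative `∇_x∇_y g (x,y)` as a linear map `ℝ^{d_y} → ℝ^{d_x}`. -/
def gXY (g : EuclideanSpace ℝ (Fin dx) → EuclideanSpace ℝ (Fin dy) → ℝ)
    (x : EuclideanSpace ℝ (Fin dx)) (y : EuclideanSpace ℝ (Fin dy)) :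
    EuclideanSpace ℝ (Fin dy) →L[ℝ] EuclideanSpace ℝ (Fin dx) :=
  ContinuousLinearMap.adjoint (fderiv ℝ (fun x' => gY g x' y) x)

/-- Hypergradient estimator `∇̄f(x,y,v) := ∇_x f(x,y) − ∇_x∇_y g(x,y) v`. -/
def barF (f g : EuclideanSpace ℝ (Fin dx) → EuclideanSpace ℝ (Fin dy) → ℝ)
    (x : EuclideanSpace ℝ (Fin dx)) (y v : EuclideanSpace ℝ (Fin dy)) :
    EuclideanSpace ℝ (Fin dx) :=
  gX f x y - gXY g x y v

/-- `∇_v R(x,y,v) = ∇_y∇_y g(x,y) v − ∇_y f(x,y)`. -/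
def gradVR (f g : EuclideanSpace ℝ (Fin dx) → EuclideanSpace ℝ (Fin dy) → ℝ)
    (x : EuclideanSpace ℝ (Fin dx)) (y v : EuclideanSpace ℝ (Fin dy)) :
    EuclideanSpace ℝ (Fin dy) :=
  gYY g x y v - gY f x y

/-!
Strong convexity makes the Hessian coercive: along the line `t ↦ y + t • v` the convex function
`g x - μ/2 ‖·‖²` has a monotone derivative, whose derivative `⟪v, ∇²_yy g v⟫ - μ‖v‖²` at `0` is
therefore nonnegative. Hence `μ ‖v̂‖ ≤ ‖∇²_yy g v̂‖ ≤ ‖∇_v R‖ + C_{f_y}`, and inserting this into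
`‖∇̄f‖ ≤ C_{f_x} + C_{g_xy} ‖v̂‖` and applying `(a + b)² ≤ 2a² + 2b²` twice gives the bound.
-/

open Set InnerProductSpace
open scoped Gradient

theorem ContDiff.differentiable_gradient {F : Type*} [NormedAddCommGroup F]
    [InnerProductSpace ℝ F] [CompleteSpace F] {f : F → ℝ} {n : WithTop ℕ∞}
    (hf : ContDiff ℝ n f) (hn : 2 ≤ n) : Differentiable ℝ (∇ f) :=
  have hf' : ContDiff ℝ 1 (fderiv ℝ f) := hf.fderiv_right (by simpa [one_add_one_eq_two] using hn)
  (toDual ℝ F).symm.differentiable.comp (hf'.differentiable one_ne_zero)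

theorem StrongConvexOn.mul_norm_sq_le_inner_fderiv_gradient {E : Type*} [NormedAddCommGroup E]
    [InnerProductSpace ℝ E] [CompleteSpace E] {G : E → ℝ} {μ : ℝ} {H : E →L[ℝ] E} {y : E}
    (hG : StrongConvexOn univ μ G) (hGd : Differentiable ℝ G) (hH : HasFDerivAt (∇ G) H y)
    (v : E) : μ * ‖v‖ ^ 2 ≤ ⟪v, H v⟫ := by
  set L : ℝ → E := fun t => y + t • v
  have hL : ∀ t, HasDerivAt L v t := fun t => by
    simpa [L] using ((hasDerivAt_id t).smul_const v).const_add y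
  set φ : ℝ → ℝ := fun t => G (L t) - μ / 2 * ‖L t‖ ^ 2
  set ψ : ℝ → ℝ := fun t => ⟪∇ G (L t), v⟫ - μ * ⟪L t, v⟫
  have hφ_convex : ConvexOn ℝ univ φ := by
    simpa [Function.comp_def] using
      ((strongConvexOn_iff_convex.mp hG).translate_right y).comp_linearMap
        (LinearMap.toSpanSingleton ℝ E v)
  have hφ_deriv : ∀ t, HasDerivAt φ (ψ t) t := fun t => by
    have hGL := (hGd (L t)).hasGradientAt.hasFDerivAt.comp_hasDerivAt t (hL t)
    exact (hGL.sub ((hL t).norm_sq.const_mul (μ / 2))).congr_deriv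
      (by simp only [ψ, toDual_apply_apply]; ring)
  have hψ_mono : Monotone ψ := fun s t hst => by
    simpa only [(hφ_deriv _).deriv] using
      hφ_convex.monotoneOn_deriv (fun t _ => (hφ_deriv t).differentiableAt) trivial trivial hst
  have hψ_deriv : HasDerivAt ψ (⟪H v, v⟫ - μ * ⟪v, v⟫) 0 := by
    have hL0 : L 0 = y := by simp [L]
    have hHL : HasFDerivAt (∇ G) H (L 0) := hL0 ▸ hH
    exact ((hHL.comp_hasDerivAt 0 (hL 0)).inner ℝ (hasDerivAt_const 0 v)).sub
      (((hL 0).inner ℝ (hasDerivAt_const 0 v)).const_mul μ) |>.congr_deriv (by simp)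
  have := hψ_deriv.nonneg_of_monotone hψ_mono
  rw [real_inner_self_eq_norm_sq, real_inner_comm] at this
  linarith

theorem mul_norm_le_norm_of_mul_norm_sq_le_inner {E : Type*} [NormedAddCommGroup E]
    [InnerProductSpace ℝ E] {μ : ℝ} {v w : E} (h : μ * ‖v‖ ^ 2 ≤ ⟪v, w⟫) : μ * ‖v‖ ≤ ‖w‖ := by
  rcases (norm_nonneg v).eq_or_lt with hv | hv
  · simp [← hv]
  · refine le_of_mul_le_mul_right ?_ hv
    nlinarith [real_inner_le_norm v w]

theorem barF_norm_bound_general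
    (f g : EuclideanSpace ℝ (Fin dx) → EuclideanSpace ℝ (Fin dy) → ℝ)
    (hg : ContDiff ℝ 2 (Function.uncurry g))
    (μ Cfx Cfy Cgxy : ℝ) (hμ : 0 < μ)
    (hsc : ∀ x, StrongConvexOn Set.univ μ (fun y => g x y))
    (hfx_bd : ∀ x y, ‖gX f x y‖ ≤ Cfx)
    (hfy_bd : ∀ x y, ‖gY f x y‖ ≤ Cfy)
    (hgxy_bd : ∀ x y, ‖gXY g x y‖ ≤ Cgxy)
    (εv : ℝ)
    (x : EuclideanSpace ℝ (Fin dx)) (yh vh : EuclideanSpace ℝ (Fin dy))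
    (happrox : ‖gradVR f g x yh vh‖ ^ 2 ≤ εv) :
    ‖barF f g x yh vh‖ ^ 2
      ≤ 2 * Cgxy ^ 2 * εv / μ ^ 2 + 4 * Cgxy ^ 2 * Cfy ^ 2 / μ ^ 2 + 4 * Cfx ^ 2 := by
  set r := ‖gradVR f g x yh vh‖
  have hG : ContDiff ℝ 2 (g x) := hg.comp (contDiff_prodMk_right x)
  have hH : HasFDerivAt (∇ (g x)) (gYY g x yh) yh :=
    (hG.differentiable_gradient le_rfl yh).hasFDerivAt
  have hv : μ * ‖vh‖ ≤ r + Cfy := calc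
    μ * ‖vh‖ ≤ ‖gYY g x yh vh‖ := mul_norm_le_norm_of_mul_norm_sq_le_inner
      ((hsc x).mul_norm_sq_le_inner_fderiv_gradient (hG.differentiable two_ne_zero) hH vh)
    _ = ‖gradVR f g x yh vh + gY f x yh‖ := by rw [gradVR, sub_add_cancel]
    _ ≤ r + Cfy := norm_add_le_of_le le_rfl (hfy_bd x yh)
  have hCgxy : 0 ≤ Cgxy := (norm_nonneg _).trans (hgxy_bd x yh)
  have hb : ‖barF f g x yh vh‖ ≤ Cgxy * r / μ + (Cfx + Cgxy * Cfy / μ) := calc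
    ‖barF f g x yh vh‖ ≤ Cfx + Cgxy * ‖vh‖ :=
      norm_sub_le_of_le (hfx_bd x yh) ((gXY g x yh).le_of_opNorm_le (hgxy_bd x yh) vh)
    _ ≤ Cfx + Cgxy * ((r + Cfy) / μ) := by gcongr; rwa [le_div_iff₀' hμ]
    _ = Cgxy * r / μ + (Cfx + Cgxy * Cfy / μ) := by ring
  calc ‖barF f g x yh vh‖ ^ 2 ≤ (Cgxy * r / μ + (Cfx + Cgxy * Cfy / μ)) ^ 2 := by gcongr
    _ ≤ 2 * ((Cgxy * r / μ) ^ 2 + 2 * (Cfx ^ 2 + (Cgxy * Cfy / μ) ^ 2)) := by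
      grw [add_sq_le, add_sq_le]
    _ = 2 * Cgxy ^ 2 * r ^ 2 / μ ^ 2 + 4 * Cgxy ^ 2 * Cfy ^ 2 / μ ^ 2 + 4 * Cfx ^ 2 := by ring
    _ ≤ 2 * Cgxy ^ 2 * εv / μ ^ 2 + 4 * Cgxy ^ 2 * Cfy ^ 2 / μ ^ 2 + 4 * Cfx ^ 2 := by gcongr

/-- bound on the norm of the hypergradient estimator when the
linear system is solved to accuracy `ε_v`. -/
theorem barF_norm_bound
    (f g : EuclideanSpace ℝ (Fin dx) → EuclideanSpace ℝ (Fin dy) → ℝ)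
    (hf : ContDiff ℝ 2 (Function.uncurry f)) (hg : ContDiff ℝ 2 (Function.uncurry g))
    (μ Cfx Cfy Cgxy : ℝ) (hμ : 0 < μ)
    (hsc : ∀ x, StrongConvexOn Set.univ μ (fun y => g x y))
    (hfx_bd : ∀ x y, ‖gX f x y‖ ≤ Cfx)
    (hfy_bd : ∀ x y, ‖gY f x y‖ ≤ Cfy)
    (hgxy_bd : ∀ x y, ‖gXY g x y‖ ≤ Cgxy)
    (εv : ℝ) (hεv : 0 < εv)
    (x : EuclideanSpace ℝ (Fin dx)) (yh vh : EuclideanSpace ℝ (Fin dy))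
    (happrox : ‖gradVR f g x yh vh‖ ^ 2 ≤ εv) :
    ‖barF f g x yh vh‖ ^ 2
      ≤ 2 * Cgxy ^ 2 * εv / μ ^ 2 + 4 * Cgxy ^ 2 * Cfy ^ 2 / μ ^ 2 + 4 * Cfx ^ 2 :=
  barF_norm_bound_general f g hg μ Cfx Cfy Cgxy hμ hsc hfx_bd hfy_bd hgxy_bd εv x yh vh happrox
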